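/- arXiv:1508.06839 — 2 statements merged into one kernel-verified Lean document; each statement's English description precedes it below -/
import Mathlib

section
/- Let m ≥ 1, let Ω ⊆ ℝ^m be a bounded open set, write E = ℝ^m ∖ closure(Ω). Let a, b, c : ℝ^m → ℝ be continuous with b(x) > 0 and c(x) ≥ 0 on ℝ^m ∖ Ω, sup_{x ∈ ℝ^m∖Ω} a₋(x)/b(x) < +∞ and sup_{x ∈ ℝ^m∖Ω} c(x)/b(x) < +∞, and let σ > 1, τ < 1. Let X : ℝ^m → ℝ^m be a continuous vector field and Lw = Δw − ⟨X, ∇w⟩, and assume the (1/b)-weak maximum principle holds for L on E: for every C² function w on E with w* := sup_E w < +∞ and every γ < w*, inf over {x ∈ E : w(x) > γ} of (1/b(x))·Lw(x) ≤ 0. If u and v are functions on ℝ^m ∖ Ω, continuous there and C² on E, both solving Lu + a(x)u − b(x)u^σ + c(x)u^τ = 0 on E, with u = v on ∂Ω and C₁ ≤ u ≤ C₂, C₁ ≤ v ≤ C₂ on ℝ^m ∖ Ω for some constants C₂ ≥ C₁ > 0, then u ≡ v on ℝ^m ∖ Ω. -/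
open Real Set

/-- The Euclidean Laplacian: trace of the Hessian. -/
noncomputable def lap {m : ℕ} (u : EuclideanSpace ℝ (Fin m) → ℝ)
    (x : EuclideanSpace ℝ (Fin m)) : ℝ :=
  ∑ i : Fin m, iteratedFDeriv ℝ 2 u x ![EuclideanSpace.single i 1, EuclideanSpace.single i 1]

/-- The drift operator `L w = Δ w - ⟨X, ∇ w⟩`. -/
noncomputable def Lop {m : ℕ} (X : EuclideanSpace ℝ (Fin m) → EuclideanSpace ℝ (Fin m))
    (w : EuclideanSpace ℝ (Fin m) → ℝ) (x : EuclideanSpace ℝ (Fin m)) : ℝ :=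
  lap w x - (inner ℝ (X x) (gradient w x) : ℝ)

/-!
Suppose `v < u` somewhere on `E`, and let `r > 1` be the least constant with `u ≤ r v` on `E`.
Where `w = u - r v` is close to its supremum `0`, subtracting `r` times the equation for `v`
from the one for `u` gives `(1/b) L w ≥ (r^σ - r) C₁^σ - o(1)`: the superlinear term gains the
factor `r^σ > r`, the sublinear term only helps since `r^τ < r`, and the `a`- and `c`-terms are
small by the bounds on `a₋/b` and `c/b`. So `(1/b) L w` is bounded below by a positive constant on
a superlevel set of `w`, contradicting the weak maximum principle. By symmetry `u = v` on `E`,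
and on `∂Ω` the boundary data agree.
-/

section Linearity

variable {m : ℕ} {u v : EuclideanSpace ℝ (Fin m) → ℝ} {x : EuclideanSpace ℝ (Fin m)}

lemma lap_sub_const_mul (r : ℝ) (hu : ContDiffAt ℝ 2 u x) (hv : ContDiffAt ℝ 2 v x) :
    lap (fun y => u y - r * v y) x = lap u x - r * lap v x := by
  have hiter : iteratedFDeriv ℝ 2 (u - r • v) x =
      iteratedFDeriv ℝ 2 u x - r • iteratedFDeriv ℝ 2 v x := by
    rw [iteratedFDeriv_sub_apply (g := r • v) hu (hv.const_smul r),
      iteratedFDeriv_const_smul_apply hv]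
  change lap (u - r • v) x = _
  simp only [lap, hiter, sub_apply, smul_apply, smul_eq_mul, Finset.sum_sub_distrib,
    Finset.mul_sum]

lemma gradient_sub_const_mul (r : ℝ) (hu : DifferentiableAt ℝ u x)
    (hv : DifferentiableAt ℝ v x) :
    gradient (fun y => u y - r * v y) x = gradient u x - r • gradient v x := by
  simp only [gradient, fderiv_fun_sub hu (hv.const_mul r), fderiv_const_mul hv, map_sub,
    map_smul]

lemma Lop_sub_const_mul (X : EuclideanSpace ℝ (Fin m) → EuclideanSpace ℝ (Fin m)) (r : ℝ)
    (hu : ContDiffAt ℝ 2 u x) (hv : ContDiffAt ℝ 2 v x) :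
    Lop X (fun y => u y - r * v y) x = Lop X u x - r * Lop X v x := by
  rw [Lop, Lop, Lop, lap_sub_const_mul r hu hv, gradient_sub_const_mul r
    (hu.differentiableAt two_ne_zero) (hv.differentiableAt two_ne_zero), inner_sub_right,
    real_inner_smul_right]
  ring

end Linearity

lemma inv_mul_Lop_sub_const_mul_eq {m : ℕ} {X : EuclideanSpace ℝ (Fin m) → EuclideanSpace ℝ (Fin m)}
    {u v : EuclideanSpace ℝ (Fin m) → ℝ} {x : EuclideanSpace ℝ (Fin m)} {A B C σ τ : ℝ}
    (r : ℝ) (hB : B ≠ 0) (hu : ContDiffAt ℝ 2 u x) (hv : ContDiffAt ℝ 2 v x)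
    (hueq : Lop X u x + A * u x - B * u x ^ σ + C * u x ^ τ = 0)
    (hveq : Lop X v x + A * v x - B * v x ^ σ + C * v x ^ τ = 0) :
    1 / B * Lop X (fun y => u y - r * v y) x = A / B * (r * v x - u x)
      + (u x ^ σ - r * v x ^ σ) + C / B * (r * v x ^ τ - u x ^ τ) := by
  rw [Lop_sub_const_mul X r hu hv]
  field_simp
  linear_combination hueq - r * hveq

lemma exists_pos_forall_abs_rpow_sub_lt (p : ℝ) {C₁ : ℝ} (hC₁ : 0 < C₁) (K : ℝ) {ε : ℝ}
    (hε : 0 < ε) : ∃ δ > 0, ∀ s ∈ Icc C₁ K, ∀ t ∈ Icc C₁ K, |s - t| < δ → |s ^ p - t ^ p| < ε :=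
  Metric.uniformContinuousOn_iff.1 (isCompact_Icc.uniformContinuousOn_of_continuous
    fun s hs => (Real.continuousAt_rpow_const s p
      (Or.inl (hC₁.trans_le hs.1).ne')).continuousWithinAt) ε hε

lemma exists_pos_le_of_near_contact {σ τ r C₁ C₂ M₁ M₂ : ℝ} (hσ : 1 < σ) (hτ : τ < 1)
    (hr : 1 < r) (hC₁ : 0 < C₁) (hM₁ : 0 ≤ M₁) (hM₂ : 0 ≤ M₂) :
    ∃ δ > 0, ∃ ε > 0, ∀ α κ U V : ℝ, -M₁ ≤ α → 0 ≤ κ → κ ≤ M₂ →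
      U ∈ Icc C₁ C₂ → V ∈ Icc C₁ C₂ → U ≤ r * V → r * V - U < δ →
      ε ≤ α * (r * V - U) + (U ^ σ - r * V ^ σ) + κ * (r * V ^ τ - U ^ τ) := by
  set ε₀ := (r ^ σ - r) * C₁ ^ σ
  have hε₀ : 0 < ε₀ :=
    mul_pos (sub_pos.2 (Real.self_lt_rpow_of_one_lt hr hσ)) (Real.rpow_pos_of_pos hC₁ σ)
  set η := ε₀ / (4 * (M₂ + 1))
  have hη : 0 < η := by positivity
  obtain ⟨δσ, hδσ, hcontσ⟩ := exists_pos_forall_abs_rpow_sub_lt σ hC₁ (r * C₂) hη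
  obtain ⟨δτ, hδτ, hcontτ⟩ := exists_pos_forall_abs_rpow_sub_lt τ hC₁ (r * C₂) hη
  refine ⟨min (min δσ δτ) (ε₀ / (4 * (M₁ + 1))), by positivity, ε₀ / 2, by positivity, ?_⟩
  intro α κ U V hα hκ hκM hU hV hUV hgap
  have hV₀ : 0 < V := hC₁.trans_le hV.1
  have hC₂r : C₂ ≤ r * C₂ := le_mul_of_one_le_left (hC₁.le.trans (hU.1.trans hU.2)) hr.le
  have hUI : U ∈ Icc C₁ (r * C₂) := ⟨hU.1, hU.2.trans hC₂r⟩
  have hWI : r * V ∈ Icc C₁ (r * C₂) :=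
    ⟨hV.1.trans (le_mul_of_one_le_left hV₀.le hr.le), by gcongr; exact hV.2⟩
  have hdist : |U - r * V| < min δσ δτ := by
    rw [abs_sub_comm, abs_of_nonneg (sub_nonneg.2 hUV)]
    exact hgap.trans_le (min_le_left _ _)
  have hση := hcontσ U hUI (r * V) hWI (hdist.trans_le (min_le_left _ _))
  have hτη := hcontτ U hUI (r * V) hWI (hdist.trans_le (min_le_right _ _))
  have hlinear : -(ε₀ / 4) ≤ α * (r * V - U) := by
    have hsmall : M₁ * (r * V - U) ≤ ε₀ / 4 := calc
      M₁ * (r * V - U) ≤ (M₁ + 1) * (ε₀ / (4 * (M₁ + 1))) := by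
        gcongr
        · linarith
        · exact hgap.le.trans (min_le_right _ _)
      _ = ε₀ / 4 := by field_simp
    nlinarith
  have habsorb : ε₀ - η ≤ U ^ σ - r * V ^ σ := by
    have hsplit : (r * V) ^ σ = r * V ^ σ + (r ^ σ - r) * V ^ σ := by
      rw [Real.mul_rpow (by linarith) hV₀.le]; ring
    have hVσ : C₁ ^ σ ≤ V ^ σ := Real.rpow_le_rpow hC₁.le hV.1 (by linarith)
    have : ε₀ ≤ (r ^ σ - r) * V ^ σ :=
      mul_le_mul_of_nonneg_left hVσ (sub_pos.2 (Real.self_lt_rpow_of_one_lt hr hσ)).le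
    linarith [neg_abs_le (U ^ σ - (r * V) ^ σ)]
  have hsublinear : -(M₂ * η) ≤ κ * (r * V ^ τ - U ^ τ) := by
    have hrτ : (r * V) ^ τ ≤ r * V ^ τ := by
      rw [Real.mul_rpow (by linarith) hV₀.le]
      exact mul_le_mul_of_nonneg_right (Real.rpow_le_self_of_one_le hr.le hτ.le)
        (Real.rpow_nonneg hV₀.le τ)
    have : -η ≤ r * V ^ τ - U ^ τ := by linarith [le_abs_self (U ^ τ - (r * V) ^ τ)]
    nlinarith
  have hη_eq : (M₂ + 1) * η = ε₀ / 4 := by simp only [η]; field_simp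
  linarith

lemma exists_optimal_dominating_multiple {α : Type*} {s : Set α} {f g : α → ℝ} {C₁ C₂ : ℝ}
    (hC₁ : 0 < C₁) (hf : ∀ x ∈ s, f x ≤ C₂) (hg : ∀ x ∈ s, g x ∈ Icc C₁ C₂)
    {x₀ : α} (hx₀ : x₀ ∈ s) (hgf : g x₀ < f x₀) :
    ∃ r, 1 < r ∧ (∀ x ∈ s, f x ≤ r * g x) ∧ ∀ δ > 0, ∃ y ∈ s, r * g y - f y < δ := by
  have hg₀ : ∀ x ∈ s, 0 < g x := fun x hx => hC₁.trans_le (hg x hx).1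
  have hC₂ : 0 < C₂ := (hg₀ x₀ hx₀).trans_le (hg x₀ hx₀).2
  set S := (fun x => f x / g x) '' s
  have hbdd : BddAbove S := ⟨C₂ / C₁, by
    rintro _ ⟨x, hx, rfl⟩
    exact div_le_div₀ hC₂.le (hf x hx) hC₁ (hg x hx).1⟩
  have hratio : ∀ x ∈ s, f x / g x ≤ sSup S := fun x hx => le_csSup hbdd (mem_image_of_mem _ hx)
  refine ⟨sSup S, ((one_lt_div (hg₀ x₀ hx₀)).2 hgf).trans_le (hratio x₀ hx₀),
    fun x hx => (div_le_iff₀ (hg₀ x hx)).1 (hratio x hx), fun δ hδ => ?_⟩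
  obtain ⟨_, ⟨y, hy, rfl⟩, hlt⟩ :=
    exists_lt_of_lt_csSup ⟨_, mem_image_of_mem _ hx₀⟩ (sub_lt_self (sSup S) (div_pos hδ hC₂))
  refine ⟨y, hy, ?_⟩
  have hlt' : (sSup S - δ / C₂) * g y < f y := (lt_div_iff₀ (hg₀ y hy)).1 hlt
  have hδg : δ / C₂ * g y ≤ δ := by
    rw [div_mul_eq_mul_div, div_le_iff₀ hC₂]
    exact mul_le_mul_of_nonneg_left (hg y hy).2 hδ.le
  linarith

def WeakMaxPrinciple {F : Type*} [NormedAddCommGroup F] [NormedSpace ℝ F]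
    (L : (F → ℝ) → F → ℝ) (q : F → ℝ) (E : Set F) : Prop :=
  ∀ w : F → ℝ, ContDiffOn ℝ 2 w E → BddAbove (w '' E) → ∀ γ < sSup (w '' E),
    sInf ((fun x => q x * L w x) '' {x ∈ E | γ < w x}) ≤ 0

theorem le_of_lichnerowicz_of_weakMaxPrinciple {m : ℕ} {E : Set (EuclideanSpace ℝ (Fin m))}
    (hE : IsOpen E) {X : EuclideanSpace ℝ (Fin m) → EuclideanSpace ℝ (Fin m)}
    {a b c : EuclideanSpace ℝ (Fin m) → ℝ} {σ τ M₁ M₂ C₁ C₂ : ℝ} (hσ : 1 < σ) (hτ : τ < 1)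
    (hb : ∀ x ∈ E, 0 < b x) (hc : ∀ x ∈ E, 0 ≤ c x)
    (hab : ∀ x ∈ E, (-min (a x) 0) / b x ≤ M₁) (hcb : ∀ x ∈ E, c x / b x ≤ M₂)
    (hWMP : WeakMaxPrinciple (Lop X) (fun x => 1 / b x) E) (hC₁ : 0 < C₁)
    {u v : EuclideanSpace ℝ (Fin m) → ℝ} (hu : ContDiffOn ℝ 2 u E) (hv : ContDiffOn ℝ 2 v E)
    (hueq : ∀ x ∈ E, Lop X u x + a x * u x - b x * u x ^ σ + c x * u x ^ τ = 0)
    (hveq : ∀ x ∈ E, Lop X v x + a x * v x - b x * v x ^ σ + c x * v x ^ τ = 0)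
    (hupinch : ∀ x ∈ E, u x ∈ Icc C₁ C₂) (hvpinch : ∀ x ∈ E, v x ∈ Icc C₁ C₂) :
    ∀ x ∈ E, u x ≤ v x := by
  by_contra! ⟨x₀, hx₀, hvu⟩
  obtain ⟨r, hr, hdom, hcontact⟩ := exists_optimal_dominating_multiple hC₁
    (fun x hx => (hupinch x hx).2) hvpinch hx₀ hvu
  have hM₁ : 0 ≤ M₁ :=
    (div_nonneg (neg_nonneg.2 (min_le_right _ _)) (hb x₀ hx₀).le).trans (hab x₀ hx₀)
  have hM₂ : 0 ≤ M₂ := (div_nonneg (hc x₀ hx₀) (hb x₀ hx₀).le).trans (hcb x₀ hx₀)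
  obtain ⟨δ, hδ, ε, hε, hgap⟩ := exists_pos_le_of_near_contact hσ hτ hr hC₁ hM₁ hM₂
  set w := fun x => u x - r * v x
  have hw_bdd : BddAbove (w '' E) := ⟨0, by
    rintro _ ⟨x, hx, rfl⟩
    exact sub_nonpos.2 (hdom x hx)⟩
  obtain ⟨y, hy, hyδ⟩ := hcontact δ hδ
  have hwy : -δ < w y := by simp only [w]; linarith
  have hpos : ∀ x ∈ {x ∈ E | -δ < w x}, ε ≤ 1 / b x * Lop X w x := by
    rintro x ⟨hx, hwx⟩
    have hx' := hE.mem_nhds hx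
    rw [inv_mul_Lop_sub_const_mul_eq r (hb x hx).ne' (hu.contDiffAt hx') (hv.contDiffAt hx')
      (hueq x hx) (hveq x hx)]
    refine hgap _ _ _ _ ?_ (div_nonneg (hc x hx) (hb x hx).le) (hcb x hx) (hupinch x hx)
      (hvpinch x hx) (hdom x hx) (by simp only [w] at hwx; linarith)
    calc -M₁ ≤ -((-min (a x) 0) / b x) := neg_le_neg (hab x hx)
      _ = min (a x) 0 / b x := by ring
      _ ≤ a x / b x := div_le_div_of_nonneg_right (min_le_left _ _) (hb x hx).le
  have hinf : ε ≤ sInf ((fun x => 1 / b x * Lop X w x) '' {x ∈ E | -δ < w x}) :=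
    le_csInf ⟨_, mem_image_of_mem _ ⟨hy, hwy⟩⟩ (forall_mem_image.2 hpos)
  have hWMPw := hWMP w (hu.sub (contDiffOn_const.mul hv)) hw_bdd (-δ)
    (hwy.trans_le (le_csSup hw_bdd (mem_image_of_mem _ hy)))
  linarith

theorem lichnerowicz_exterior_uniqueness_general {m : ℕ}
    (Ω : Set (EuclideanSpace ℝ (Fin m)))
    (E : Set (EuclideanSpace ℝ (Fin m))) (hE : E = (closure Ω)ᶜ)
    (a b c : EuclideanSpace ℝ (Fin m) → ℝ)
    (hbpos : ∀ x ∈ Ωᶜ, 0 < b x) (hcpos : ∀ x ∈ Ωᶜ, 0 ≤ c x)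
    (hab : ∃ M : ℝ, ∀ x ∈ Ωᶜ, (-min (a x) 0) / b x ≤ M)
    (hcb : ∃ M : ℝ, ∀ x ∈ Ωᶜ, c x / b x ≤ M)
    (σ τ : ℝ) (hσ : 1 < σ) (hτ : τ < 1)
    (X : EuclideanSpace ℝ (Fin m) → EuclideanSpace ℝ (Fin m))
    (hWMP : ∀ w : EuclideanSpace ℝ (Fin m) → ℝ, ContDiffOn ℝ 2 w E →
      BddAbove (w '' E) → ∀ γ < sSup (w '' E),
        sInf ((fun x => (1 / b x) * Lop X w x) '' {x ∈ E | γ < w x}) ≤ 0)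
    (u v : EuclideanSpace ℝ (Fin m) → ℝ)
    (huC2 : ContDiffOn ℝ 2 u E) (hvC2 : ContDiffOn ℝ 2 v E)
    (hueq : ∀ x ∈ E, Lop X u x + a x * u x - b x * u x ^ σ + c x * u x ^ τ = 0)
    (hveq : ∀ x ∈ E, Lop X v x + a x * v x - b x * v x ^ σ + c x * v x ^ τ = 0)
    (hbdry : ∀ x ∈ frontier Ω, u x = v x)
    (C₁ C₂ : ℝ) (hC₁ : 0 < C₁)
    (hupinch : ∀ x ∈ Ωᶜ, C₁ ≤ u x ∧ u x ≤ C₂)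
    (hvpinch : ∀ x ∈ Ωᶜ, C₁ ≤ v x ∧ v x ≤ C₂) :
    ∀ x ∈ Ωᶜ, u x = v x := by
  have hEo : IsOpen E := hE ▸ isClosed_closure.isOpen_compl
  have hEΩ : E ⊆ Ωᶜ := hE ▸ compl_subset_compl.2 subset_closure
  obtain ⟨M₁, hM₁⟩ := hab
  obtain ⟨M₂, hM₂⟩ := hcb
  have hb : ∀ x ∈ E, 0 < b x := fun x hx => hbpos x (hEΩ hx)
  have hc : ∀ x ∈ E, 0 ≤ c x := fun x hx => hcpos x (hEΩ hx)
  have hab : ∀ x ∈ E, (-min (a x) 0) / b x ≤ M₁ := fun x hx => hM₁ x (hEΩ hx)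
  have hcb : ∀ x ∈ E, c x / b x ≤ M₂ := fun x hx => hM₂ x (hEΩ hx)
  have hu : ∀ x ∈ E, u x ∈ Icc C₁ C₂ := fun x hx => hupinch x (hEΩ hx)
  have hv : ∀ x ∈ E, v x ∈ Icc C₁ C₂ := fun x hx => hvpinch x (hEΩ hx)
  have huv := le_of_lichnerowicz_of_weakMaxPrinciple hEo hσ hτ hb hc hab hcb hWMP hC₁
    huC2 hvC2 hueq hveq hu hv
  have hvu := le_of_lichnerowicz_of_weakMaxPrinciple hEo hσ hτ hb hc hab hcb hWMP hC₁
    hvC2 huC2 hveq hueq hv hu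
  intro x hx
  by_cases hxΩ : x ∈ closure Ω
  · exact hbdry x ⟨hxΩ, fun hint => hx (interior_subset hint)⟩
  · exact le_antisymm (huv x (hE ▸ hxΩ)) (hvu x (hE ▸ hxΩ))

/-- Uniqueness on an exterior domain: the Lichnerowicz equation admits at most one
solution with given boundary data pinched between two positive constants, provided
the (1/b)-weak maximum principle holds for `L = Δ - ⟨X, ∇·⟩`. -/
theorem lichnerowicz_exterior_uniqueness {m : ℕ} (hm : 1 ≤ m)
    (Ω : Set (EuclideanSpace ℝ (Fin m))) (hΩo : IsOpen Ω) (hΩb : Bornology.IsBounded Ω)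
    (E : Set (EuclideanSpace ℝ (Fin m))) (hE : E = (closure Ω)ᶜ)
    (a b c : EuclideanSpace ℝ (Fin m) → ℝ)
    (ha : Continuous a) (hb : Continuous b) (hc : Continuous c)
    (hbpos : ∀ x ∈ Ωᶜ, 0 < b x) (hcpos : ∀ x ∈ Ωᶜ, 0 ≤ c x)
    (hab : ∃ M : ℝ, ∀ x ∈ Ωᶜ, (-min (a x) 0) / b x ≤ M)
    (hcb : ∃ M : ℝ, ∀ x ∈ Ωᶜ, c x / b x ≤ M)
    (σ τ : ℝ) (hσ : 1 < σ) (hτ : τ < 1)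
    (X : EuclideanSpace ℝ (Fin m) → EuclideanSpace ℝ (Fin m)) (hX : Continuous X)
    (hWMP : ∀ w : EuclideanSpace ℝ (Fin m) → ℝ, ContDiffOn ℝ 2 w E →
      BddAbove (w '' E) → ∀ γ < sSup (w '' E),
        sInf ((fun x => (1 / b x) * Lop X w x) '' {x ∈ E | γ < w x}) ≤ 0)
    (u v : EuclideanSpace ℝ (Fin m) → ℝ)
    (hucont : ContinuousOn u Ωᶜ) (hvcont : ContinuousOn v Ωᶜ)
    (huC2 : ContDiffOn ℝ 2 u E) (hvC2 : ContDiffOn ℝ 2 v E)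
    (hueq : ∀ x ∈ E, Lop X u x + a x * u x - b x * u x ^ σ + c x * u x ^ τ = 0)
    (hveq : ∀ x ∈ E, Lop X v x + a x * v x - b x * v x ^ σ + c x * v x ^ τ = 0)
    (hbdry : ∀ x ∈ frontier Ω, u x = v x)
    (C₁ C₂ : ℝ) (hC₁ : 0 < C₁) (hC₁₂ : C₁ ≤ C₂)
    (hupinch : ∀ x ∈ Ωᶜ, C₁ ≤ u x ∧ u x ≤ C₂)
    (hvpinch : ∀ x ∈ Ωᶜ, C₁ ≤ v x ∧ v x ≤ C₂) :
    ∀ x ∈ Ωᶜ, u x = v x :=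
  lichnerowicz_exterior_uniqueness_general Ω E hE a b c hbpos hcpos hab hcb σ τ hσ hτ X hWMP u v
    huC2 hvC2 hueq hveq hbdry C₁ C₂ hC₁ hupinch hvpinch
end

section
/- Let m ≥ 1 and let Ω ⊆ ℝ^m be a bounded open set. Let f₁, f₂ : ℝ^m × ℝ → ℝ be functions such that f₂(x,s)/s ≥ f₁(x,t)/t for every x ∈ ℝ^m and all reals 0 < s ≤ t. Let u, v be continuous on the closure of Ω and C² on Ω, with u ≥ 0 and v > 0 on the closure of Ω, satisfying Δu(x) + f₁(x, u(x)) ≥ 0 and Δv(x) + f₂(x, v(x)) ≤ 0 for all x ∈ Ω. If u ≤ v on the boundary ∂Ω, then u ≤ v on Ω. -/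
open Real Set

/-!
Suppose `u > v` somewhere in `Ω`, and let `θ > 1` be the maximum of `u / v` over `closure Ω`; it
is attained at some `z ∈ Ω` because `u ≤ v` on `∂Ω`. Fix `1 < κ < θ`. The open set
`V = {x ∈ Ω | κ v x < u x}` contains `z` and has compact closure inside `Ω`, where `u / v ≥ κ > 1`.
There the monotonicity of `f(x, s) / s` turns the two differential inequalities into `Δw ≥ M w`
for `w = u - θ v ≤ 0` and a constant `M ≥ 0` bounding `Δu / u`. By the weak maximum principle for
`Δ - M` (proved by adding `ε exp ⟪a, x⟫` with `‖a‖² = M + 1` to `w`, which makes the inequality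
strict), the value `w z = 0` is attained or exceeded somewhere on `∂V`. But `u ≤ κ v < θ v` on `∂V`.
-/

open Filter Topology InnerProductSpace Laplacian

theorem lap_eq_laplacian {m : ℕ} (u : EuclideanSpace ℝ (Fin m) → ℝ) : lap u = Δ u := by
  ext x
  simp [lap, laplacian_eq_iteratedFDeriv_orthonormalBasis u (EuclideanSpace.basisFun (Fin m) ℝ)]

theorem IsLocalMax.deriv_deriv_nonpos {f : ℝ → ℝ} {x : ℝ} (h : IsLocalMax f x)
    (hc : ContinuousAt f x) : deriv (deriv f) x ≤ 0 := by
  by_contra! hpos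
  have hmin := isLocalMin_of_deriv_deriv_pos hpos h.deriv_eq_zero hc
  have hconst : f =ᶠ[𝓝 x] fun _ => f x := (h.and hmin).mono fun y hy => le_antisymm hy.1 hy.2
  rw [hconst.deriv.deriv_eq] at hpos
  simp at hpos

section NormedSpace

variable {E F : Type*} [NormedAddCommGroup E] [NormedSpace ℝ E] [NormedAddCommGroup F]
  [NormedSpace ℝ F]

theorem hasDerivAt_add_smul (y e : E) (t : ℝ) : HasDerivAt (fun s : ℝ => y + s • e) e t := by
  simpa using ((hasDerivAt_id t).smul_const e).const_add y

theorem ContDiffAt.deriv_deriv_comp_add_smul {g : E → F} {y : E} (hg : ContDiffAt ℝ 2 g y)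
    (e : E) : deriv (deriv fun t : ℝ => g (y + t • e)) 0 = iteratedFDeriv ℝ 2 g y ![e, e] := by
  have hline : Tendsto (fun t : ℝ => y + t • e) (𝓝 0) (𝓝 y) := by
    simpa using (hasDerivAt_add_smul y e 0).continuousAt.tendsto
  have hdiff : ∀ᶠ x in 𝓝 y, DifferentiableAt ℝ g x :=
    (hg.eventually (by simp)).mono fun x hx => hx.differentiableAt (by simp)
  have hderiv : deriv (fun t : ℝ => g (y + t • e)) =ᶠ[𝓝 0] fun t => fderiv ℝ g (y + t • e) e :=
    (hline.eventually hdiff).mono fun t ht =>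
      (ht.hasFDerivAt.comp_hasDerivAt t (hasDerivAt_add_smul y e t)).deriv
  have hfderiv : HasFDerivAt (fderiv ℝ g) (fderiv ℝ (fderiv ℝ g) (y + (0 : ℝ) • e))
      (y + (0 : ℝ) • e) := by
    rw [zero_smul, add_zero]
    exact ((hg.fderiv_right (m := 1) (by norm_num)).differentiableAt one_ne_zero).hasFDerivAt
  rw [hderiv.deriv_eq, iteratedFDeriv_two_apply]
  simpa [Function.comp_def] using ((ContinuousLinearMap.apply ℝ F e).hasFDerivAt.comp_hasDerivAt 0
    (hfderiv.comp_hasDerivAt 0 (hasDerivAt_add_smul y e 0))).deriv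

end NormedSpace

section InnerProductSpace

variable {E : Type*} [NormedAddCommGroup E] [InnerProductSpace ℝ E] [FiniteDimensional ℝ E]

theorem IsLocalMax.laplacian_nonpos {g : E → ℝ} {y : E} (hmax : IsLocalMax g y)
    (hg : ContDiffAt ℝ 2 g y) : Δ g y ≤ 0 := by
  rw [laplacian_eq_iteratedFDeriv_stdOrthonormalBasis]
  refine Finset.sum_nonpos fun i _ => ?_
  rw [← hg.deriv_deriv_comp_add_smul]
  have hline := (hasDerivAt_add_smul y (stdOrthonormalBasis ℝ E i) 0).continuousAt
  have hy : y + (0 : ℝ) • stdOrthonormalBasis ℝ E i = y := by simp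
  refine IsLocalMax.deriv_deriv_nonpos ?_ ?_
  · exact IsLocalMax.comp_continuous (by rwa [hy]) hline
  · exact ContinuousAt.comp (by rw [hy]; exact hg.continuousAt) hline

theorem laplacian_comp_inner {g : ℝ → ℝ} (hg : ContDiff ℝ 2 g) (a x : E) :
    Δ (fun y => g ⟪a, y⟫_ℝ) x = ‖a‖ ^ 2 * iteratedDeriv 2 g ⟪a, x⟫_ℝ := by
  have hcomp : (fun y => g ⟪a, y⟫_ℝ) = g ∘ innerSL ℝ a := rfl
  rw [laplacian_eq_iteratedFDeriv_stdOrthonormalBasis, hcomp]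
  beta_reduce
  rw [(innerSL ℝ a).iteratedFDeriv_comp_right hg x le_rfl]
  simp only [ContinuousMultilinearMap.compContinuousLinearMap_apply,
    iteratedFDeriv_apply_eq_iteratedDeriv_mul_prod, Fin.prod_univ_two, smul_eq_mul]
  simp [← Finset.sum_mul, ← (stdOrthonormalBasis ℝ E).sum_sq_inner_right a, sq, real_inner_comm]

theorem ContDiffOn.continuousOn_laplacian {u : E → ℝ} {Ω : Set E} (h : ContDiffOn ℝ 2 u Ω)
    (hΩ : IsOpen Ω) : ContinuousOn (Δ u) Ω := by
  have hD2 : ContinuousOn (iteratedFDeriv ℝ 2 u) Ω :=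
    (h.continuousOn_iteratedFDerivWithin le_rfl hΩ.uniqueDiffOn).congr fun x hx =>
      (iteratedFDerivWithin_of_isOpen 2 hΩ hx).symm
  rw [laplacian_eq_iteratedFDeriv_stdOrthonormalBasis]
  exact continuousOn_finsetSum _ fun i _ => (continuous_eval_const _).comp_continuousOn hD2

theorem exists_laplacian_le_mul_of_isCompact {u : E → ℝ} {Ω K : Set E} (hΩ : IsOpen Ω)
    (hK : IsCompact K) (hKΩ : K ⊆ Ω) (hu : ContDiffOn ℝ 2 u Ω) (hu0 : ∀ x ∈ K, 0 < u x) :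
    ∃ M, 0 ≤ M ∧ ∀ x ∈ K, Δ u x ≤ M * u x := by
  obtain ⟨C, hC⟩ := hK.exists_bound_of_continuousOn
    (((hu.continuousOn_laplacian hΩ).mono hKΩ).div (hu.continuousOn.mono hKΩ)
      fun x hx => (hu0 x hx).ne')
  refine ⟨max C 0, le_max_right C 0, fun x hx => ?_⟩
  have hquot : Δ u x / u x ≤ C := (le_abs_self _).trans (hC x hx)
  rw [div_le_iff₀ (hu0 x hx)] at hquot
  nlinarith [le_max_left C 0, hu0 x hx]

variable {V : Set E}

theorem exists_mem_frontier_le_of_laplacian_pos {W : E → ℝ} (hVo : IsOpen V)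
    (hVc : IsCompact (closure V)) (hWc : ContinuousOn W (closure V)) (hW : ContDiffOn ℝ 2 W V)
    (hΔ : ∀ y ∈ V, 0 ≤ W y → 0 < Δ W y) {z : E} (hz : z ∈ V) (hWz : 0 ≤ W z) :
    ∃ y ∈ frontier V, W z ≤ W y := by
  obtain ⟨y, hy, hmax⟩ := hVc.exists_isMaxOn ⟨z, subset_closure hz⟩ hWc
  have hzy : W z ≤ W y := hmax (subset_closure hz)
  refine ⟨y, ?_, hzy⟩
  rw [hVo.frontier_eq]
  refine ⟨hy, fun hyV => ?_⟩
  have hloc : IsLocalMax W y :=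
    mem_of_superset (hVo.mem_nhds hyV) fun x hx => hmax (subset_closure hx)
  exact (hΔ y hyV (hWz.trans hzy)).not_ge
    (hloc.laplacian_nonpos (hW.contDiffAt (hVo.mem_nhds hyV)))

theorem exists_mem_frontier_le_of_mul_le_laplacian [Nontrivial E] {w : E → ℝ} {M : ℝ}
    (hVo : IsOpen V) (hVc : IsCompact (closure V)) (hwc : ContinuousOn w (closure V))
    (hw : ContDiffOn ℝ 2 w V) (hM : 0 ≤ M) (hΔ : ∀ y ∈ V, M * w y ≤ Δ w y) {z : E} (hz : z ∈ V)
    (hwz : 0 ≤ w z) : ∃ x ∈ frontier V, w z ≤ w x := by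
  obtain ⟨a, ha⟩ := exists_norm_eq E (sqrt_nonneg (M + 1))
  set φ : E → ℝ := fun x => exp ⟪a, x⟫_ℝ
  have hφ : ContDiff ℝ 2 φ := contDiff_exp.comp (innerSL ℝ a).contDiff
  have hΔφ : ∀ x, Δ φ x = (M + 1) * φ x := fun x => by
    rw [laplacian_comp_inner contDiff_exp, ha, sq_sqrt (by linarith), iteratedDeriv_eq_iterate,
      iter_deriv_exp]
  obtain ⟨C, hC⟩ : ∃ C, ∀ x ∈ closure V, φ x ≤ C :=
    (hVc.bddAbove_image hφ.continuous.continuousOn).imp fun C hC x hx => hC ⟨x, hx, rfl⟩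
  have hC0 : 0 < C := (exp_pos _).trans_le (hC z (subset_closure hz))
  have hperturbed : ∀ ε > 0, ∃ y ∈ frontier V, w z ≤ w y + ε * C := by
    intro ε hε
    have hΔW : ∀ y ∈ V, 0 ≤ (w + ε • φ) y → 0 < Δ (w + ε • φ) y := by
      intro y hy hWy
      have hεφ : ContDiffAt ℝ 2 (ε • φ) y := hφ.contDiffAt.const_smul ε
      rw [(hw.contDiffAt (hVo.mem_nhds hy)).laplacian_add hεφ, laplacian_smul _ hφ.contDiffAt,
        hΔφ]
      simp only [Pi.add_apply, Pi.smul_apply, smul_eq_mul] at hWy ⊢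
      nlinarith [hΔ y hy, mul_nonneg hM hWy, mul_pos hε (exp_pos ⟪a, y⟫_ℝ)]
    obtain ⟨y, hy, hle⟩ := exists_mem_frontier_le_of_laplacian_pos (W := w + ε • φ) hVo hVc
      (hwc.add (hφ.continuous.continuousOn.const_smul ε)) (hw.add (hφ.contDiffOn.const_smul ε))
      hΔW hz (by simpa using add_nonneg hwz (mul_pos hε (exp_pos ⟪a, z⟫_ℝ)).le)
    refine ⟨y, hy, ?_⟩
    simp only [Pi.add_apply, Pi.smul_apply, smul_eq_mul] at hle
    nlinarith [hC y (frontier_subset_closure hy), mul_pos hε (exp_pos ⟪a, z⟫_ℝ)]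
  obtain ⟨y₀, hy₀, -⟩ := hperturbed 1 one_pos
  obtain ⟨x, hx, hxmax⟩ := (hVc.of_isClosed_subset isClosed_frontier
    frontier_subset_closure).exists_isMaxOn ⟨y₀, hy₀⟩ (hwc.mono frontier_subset_closure)
  refine ⟨x, hx, le_of_forall_pos_le_add fun δ hδ => ?_⟩
  obtain ⟨y, hy, hle⟩ := hperturbed (δ / C) (div_pos hδ hC0)
  rw [div_mul_cancel₀ _ hC0.ne'] at hle
  linarith [isMaxOn_iff.mp hxmax y hy]

theorem mul_le_laplacian_sub_smul {u v : E → ℝ} {y : E} {θ M F₁ F₂ : ℝ} (hu : ContDiffAt ℝ 2 u y)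
    (hv : ContDiffAt ℝ 2 v y) (hθ : 0 ≤ θ) (huy : 0 < u y) (hvy : 0 < v y)
    (huθv : u y ≤ θ * v y) (hsub : 0 ≤ Δ u y + F₁) (hsup : Δ v y + F₂ ≤ 0)
    (hF : F₁ / u y ≤ F₂ / v y) (hΔu : Δ u y ≤ M * u y) :
    M * (u - θ • v) y ≤ Δ (u - θ • v) y := by
  have hθv : ContDiffAt ℝ 2 (θ • v) y := hv.const_smul θ
  rw [hu.laplacian_sub hθv, laplacian_smul _ hv]
  simp only [Pi.sub_apply, Pi.smul_apply, smul_eq_mul]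
  obtain ⟨a, rfl⟩ : ∃ a, F₁ = a * u y := ⟨F₁ / u y, (div_mul_cancel₀ _ huy.ne').symm⟩
  obtain ⟨c, rfl⟩ : ∃ c, F₂ = c * v y := ⟨F₂ / v y, (div_mul_cancel₀ _ hvy.ne').symm⟩
  rw [mul_div_cancel_right₀ _ huy.ne', mul_div_cancel_right₀ _ hvy.ne'] at hF
  have haM : 0 ≤ a + M := nonneg_of_mul_nonneg_left (by nlinarith) huy
  nlinarith [mul_le_mul_of_nonneg_left hsup hθ, mul_le_mul_of_nonneg_right hF huy.le,
    mul_nonneg (haM.trans (by linarith : a + M ≤ c + M)) (sub_nonneg.2 huθv)]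

theorem exists_mem_frontier_mul_le_of_eq_mul [Nontrivial E] {Ω V : Set E} {u v : E → ℝ}
    {f₁ f₂ : E → ℝ → ℝ} {θ : ℝ} (hf : ∀ x (s t : ℝ), 0 < s → s ≤ t → f₁ x t / t ≤ f₂ x s / s)
    (hΩ : IsOpen Ω) (hVo : IsOpen V) (hVc : IsCompact (closure V)) (hVΩ : closure V ⊆ Ω)
    (hu : ContDiffOn ℝ 2 u Ω) (hv : ContDiffOn ℝ 2 v Ω) (hv0 : ∀ x ∈ closure V, 0 < v x)
    (hvu : ∀ x ∈ closure V, v x ≤ u x) (hθ : 0 ≤ θ) (huθv : ∀ x ∈ V, u x ≤ θ * v x)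
    (hsub : ∀ x ∈ V, 0 ≤ Δ u x + f₁ x (u x)) (hsup : ∀ x ∈ V, Δ v x + f₂ x (v x) ≤ 0) {z : E}
    (hz : z ∈ V) (huz : u z = θ * v z) : ∃ x ∈ frontier V, θ * v x ≤ u x := by
  have hupos : ∀ x ∈ closure V, 0 < u x := fun x hx => (hv0 x hx).trans_le (hvu x hx)
  obtain ⟨M, hM, hΔu⟩ := exists_laplacian_le_mul_of_isCompact hΩ hVc hVΩ hu hupos
  have hΔw : ∀ y ∈ V, M * (u - θ • v) y ≤ Δ (u - θ • v) y := fun y hy => by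
    have hyV := subset_closure hy
    have hyΩ : Ω ∈ 𝓝 y := hΩ.mem_nhds (hVΩ hyV)
    exact mul_le_laplacian_sub_smul (hu.contDiffAt hyΩ) (hv.contDiffAt hyΩ) hθ (hupos y hyV)
      (hv0 y hyV) (huθv y hy) (hsub y hy) (hsup y hy) (hf y _ _ (hv0 y hyV) (hvu y hyV))
      (hΔu y hyV)
  have hw : ContDiffOn ℝ 2 (u - θ • v) Ω := hu.sub (hv.const_smul θ)
  obtain ⟨x, hx, hwx⟩ := exists_mem_frontier_le_of_mul_le_laplacian hVo hVc
    (hw.continuousOn.mono hVΩ) (hw.mono (subset_closure.trans hVΩ)) hM hΔw hz (by simp [huz])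
  exact ⟨x, hx, by simpa [huz] using hwx⟩

end InnerProductSpace

section Topology

variable {X : Type*} [TopologicalSpace X] {Ω : Set X} {u v : X → ℝ}

theorem ContinuousOn.isOpen_sep_lt (hΩ : IsOpen Ω) (hu : ContinuousOn u Ω)
    (hv : ContinuousOn v Ω) : IsOpen {x ∈ Ω | u x < v x} :=
  (hu.prodMk hv).isOpen_inter_preimage hΩ (isOpen_lt continuous_fst continuous_snd)

theorem exists_max_ratio_mem_of_lt (hΩ : IsOpen Ω) (hK : IsCompact (closure Ω))
    (hu : ContinuousOn u (closure Ω)) (hv : ContinuousOn v (closure Ω))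
    (hv0 : ∀ x ∈ closure Ω, 0 < v x) (hbdry : ∀ x ∈ frontier Ω, u x ≤ v x) {x₁ : X}
    (hx₁ : x₁ ∈ Ω) (hlt : v x₁ < u x₁) :
    ∃ z ∈ Ω, ∃ θ, 1 < θ ∧ u z = θ * v z ∧ ∀ x ∈ closure Ω, u x ≤ θ * v x := by
  have hx₁K : x₁ ∈ closure Ω := subset_closure hx₁
  obtain ⟨z, hzK, hzmax⟩ := hK.exists_isMaxOn ⟨x₁, hx₁K⟩ (hu.div hv fun x hx => (hv0 x hx).ne')
  have hθ : 1 < u z / v z := ((one_lt_div (hv0 x₁ hx₁K)).2 hlt).trans_le (hzmax hx₁K)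
  refine ⟨z, ?_, u z / v z, hθ, (div_mul_cancel₀ _ (hv0 z hzK).ne').symm, fun x hx => ?_⟩
  · by_contra hzΩ
    have hzbdry : z ∈ frontier Ω := ⟨hzK, by rwa [hΩ.interior_eq]⟩
    exact hθ.not_ge ((div_le_one (hv0 z hzK)).2 (hbdry z hzbdry))
  · exact (div_le_iff₀ (hv0 x hx)).1 (isMaxOn_iff.mp hzmax x hx)

theorem closure_sep_mul_lt_subset (hΩ : IsOpen Ω) (hu : ContinuousOn u (closure Ω))
    (hv : ContinuousOn v (closure Ω)) (hv0 : ∀ x ∈ closure Ω, 0 < v x)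
    (hbdry : ∀ x ∈ frontier Ω, u x ≤ v x) {κ : ℝ} (hκ : 1 < κ) :
    closure {x ∈ Ω | κ * v x < u x} ⊆ {x ∈ Ω | κ * v x ≤ u x} := by
  intro x hx
  have hxK : closure {x ∈ Ω | κ * v x < u x} ⊆ closure Ω := closure_mono fun y hy => hy.1
  have hle : κ * v x ≤ u x := le_on_closure (fun y hy => hy.2.le)
    ((hv.mono hxK).const_smul κ) (hu.mono hxK) hx
  refine ⟨?_, hle⟩
  by_contra hxΩ
  have hxbdry : x ∈ frontier Ω := ⟨hxK hx, by rwa [hΩ.interior_eq]⟩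
  nlinarith [hbdry x hxbdry, hv0 x (hxK hx)]

end Topology

theorem comparison_on_bounded_domain_general {m : ℕ} (hm : 1 ≤ m)
    (Ω : Set (EuclideanSpace ℝ (Fin m))) (hΩo : IsOpen Ω) (hΩb : Bornology.IsBounded Ω)
    (f₁ f₂ : EuclideanSpace ℝ (Fin m) → ℝ → ℝ)
    (hf : ∀ x (s t : ℝ), 0 < s → s ≤ t → f₁ x t / t ≤ f₂ x s / s)
    (u v : EuclideanSpace ℝ (Fin m) → ℝ)
    (hucont : ContinuousOn u (closure Ω)) (hvcont : ContinuousOn v (closure Ω))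
    (huC2 : ContDiffOn ℝ 2 u Ω) (hvC2 : ContDiffOn ℝ 2 v Ω)
    (hv0 : ∀ x ∈ closure Ω, 0 < v x)
    (hsub : ∀ x ∈ Ω, 0 ≤ lap u x + f₁ x (u x))
    (hsup : ∀ x ∈ Ω, lap v x + f₂ x (v x) ≤ 0)
    (hbdry : ∀ x ∈ frontier Ω, u x ≤ v x) :
    ∀ x ∈ Ω, u x ≤ v x := by
  have : NeZero m := ⟨by omega⟩
  simp only [lap_eq_laplacian] at hsub hsup
  by_contra! hcon
  obtain ⟨x₁, hx₁, hlt⟩ := hcon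
  obtain ⟨z, hz, θ, hθ, huz, huθv⟩ := exists_max_ratio_mem_of_lt hΩo hΩb.isCompact_closure
    hucont hvcont hv0 hbdry hx₁ hlt
  obtain ⟨κ, hκ, hκθ⟩ : ∃ κ, 1 < κ ∧ κ < θ := ⟨(1 + θ) / 2, by linarith, by linarith⟩
  set V := {x ∈ Ω | κ * v x < u x}
  have hVΩ : closure V ⊆ {x ∈ Ω | κ * v x ≤ u x} :=
    closure_sep_mul_lt_subset hΩo hucont hvcont hv0 hbdry hκ
  have hVK : closure V ⊆ closure Ω := fun x hx => subset_closure (hVΩ hx).1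
  have hVo : IsOpen V :=
    ContinuousOn.isOpen_sep_lt hΩo (hvC2.continuousOn.const_smul κ) huC2.continuousOn
  have hzV : z ∈ V := ⟨hz, huz ▸ mul_lt_mul_of_pos_right hκθ (hv0 z (subset_closure hz))⟩
  obtain ⟨x, hx, hθvx⟩ := exists_mem_frontier_mul_le_of_eq_mul hf hΩo hVo
    (hΩb.isCompact_closure.of_isClosed_subset isClosed_closure hVK) (fun x hx => (hVΩ hx).1)
    huC2 hvC2 (fun x hx => hv0 x (hVK hx))
    (fun x hx => by nlinarith [(hVΩ hx).2, hv0 x (hVK hx)]) (by linarith)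
    (fun x hx => huθv x (subset_closure hx.1)) (fun x hx => hsub x hx.1) (fun x hx => hsup x hx.1)
    hzV huz
  rw [hVo.frontier_eq] at hx
  have hxΩ := (hVΩ hx.1).1
  have hux : u x ≤ κ * v x := not_lt.1 fun h => hx.2 ⟨hxΩ, h⟩
  nlinarith [hv0 x (subset_closure hxΩ)]

/-- Comparison lemma on a bounded domain for sub- and supersolutions of
`Δu + f(x,u) = 0` with a monotone nonlinearity quotient. -/
theorem comparison_on_bounded_domain {m : ℕ} (hm : 1 ≤ m)
    (Ω : Set (EuclideanSpace ℝ (Fin m))) (hΩo : IsOpen Ω) (hΩb : Bornology.IsBounded Ω)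
    (f₁ f₂ : EuclideanSpace ℝ (Fin m) → ℝ → ℝ)
    (hf : ∀ x (s t : ℝ), 0 < s → s ≤ t → f₁ x t / t ≤ f₂ x s / s)
    (u v : EuclideanSpace ℝ (Fin m) → ℝ)
    (hucont : ContinuousOn u (closure Ω)) (hvcont : ContinuousOn v (closure Ω))
    (huC2 : ContDiffOn ℝ 2 u Ω) (hvC2 : ContDiffOn ℝ 2 v Ω)
    (hu0 : ∀ x ∈ closure Ω, 0 ≤ u x) (hv0 : ∀ x ∈ closure Ω, 0 < v x)
    (hsub : ∀ x ∈ Ω, 0 ≤ lap u x + f₁ x (u x))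
    (hsup : ∀ x ∈ Ω, lap v x + f₂ x (v x) ≤ 0)
    (hbdry : ∀ x ∈ frontier Ω, u x ≤ v x) :
    ∀ x ∈ Ω, u x ≤ v x :=
  comparison_on_bounded_domain_general hm Ω hΩo hΩb f₁ f₂ hf u v hucont hvcont huC2 hvC2 hv0 hsub
    hsup hbdry
end
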